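/- For any left R-module M with finite injective dimension, the Gorenstein injective dimension of M equals its injective dimension. -/

import Mathlib

open CategoryTheory

universe w v u

namespace RelHomDim

variable {C : Type u} [Category.{v} C] [Abelian C]

/-- `idLE T n M` means that `M` admits a coresolution
`0 → M → X⁰ → X¹ → ⋯ → Xⁿ → 0` with all `Xⁱ` in `T`, i.e. the `T`-injective
dimension of `M` is at most `n`. -/
def idLE (T : C → Prop) : ℕ → C → Prop
  | 0, M => T M
  | n + 1, M => ∃ S : ShortComplex C, S.ShortExact ∧ Nonempty (S.X₁ ≅ M) ∧
      T S.X₂ ∧ idLE T n S.X₃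

/-- The `T`-injective dimension of `M`, as an element of `ℕ∞`. -/
noncomputable def idim (T : C → Prop) (M : C) : ℕ∞ :=
  sInf {n : ℕ∞ | ∃ k : ℕ, n = (k : ℕ∞) ∧ idLE T k M}

/-- `N` admits an exact resolution `⋯ → C₁ → C₀ → N → 0` with all `Cᵢ` in `𝒞`
which stays exact after applying `Hom(E, −)` for every `E ∈ ℰ`. -/
def HasHomExactResolution (ℰ 𝒞 : C → Prop) (N : C) : Prop :=
  ∃ (X : ℕ → C) (d : ∀ n, X (n + 1) ⟶ X n) (π : X 0 ⟶ N),
    (∀ n, 𝒞 (X n)) ∧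
    Epi π ∧
    (∃ w : d 0 ≫ π = 0, (ShortComplex.mk (d 0) π w).Exact) ∧
    (∀ n, ∃ w : d (n + 1) ≫ d n = 0, (ShortComplex.mk (d (n + 1)) (d n) w).Exact) ∧
    (∀ E : C, ℰ E →
      (∀ g : E ⟶ N, ∃ h : E ⟶ X 0, h ≫ π = g) ∧
      (∀ g : E ⟶ X 0, g ≫ π = 0 → ∃ h : E ⟶ X 1, h ≫ d 0 = g) ∧
      (∀ n, ∀ g : E ⟶ X (n + 1), g ≫ d n = 0 →
        ∃ h : E ⟶ X (n + 2), h ≫ d (n + 1) = g))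

variable [HasExt.{w} C]

/-- `N` is Gorenstein injective: `Extⁿ(I, N) = 0` for all `n ≥ 1` and all
injective `I`, and `N` admits an exact resolution by injectives which stays
exact under `Hom(J, −)` for every injective `J`. -/
def GorensteinInjective (N : C) : Prop :=
  (∀ I : C, Injective I → ∀ n : ℕ, 1 ≤ n → Subsingleton (Abelian.Ext I N n)) ∧
  HasHomExactResolution (fun I => Injective I) (fun I => Injective I) N

end RelHomDim

universe w'

namespace GIaux

open CategoryTheory Limits DerivedCategory RelHomDim Abelian

section NullHomotopy

variable {R : Type u} [Ring R]

noncomputable def nullHomotopyOfAcyclic (A T : CochainComplex (ModuleCat.{u} R) ℤ) (k : ℤ)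
    (hA : ∀ n, A.ExactAt n) (hT : ∀ j, j ≠ k → IsZero (T.X j)) (hI : Injective (T.X k))
    (f : A ⟶ T) : Homotopy f 0 := by
  classical
  have hker : ∀ x : A.X k, A.d k (k + 1) x = 0 → f.f k x = 0 := by
    intro x hx
    have hex : (A.sc' (k - 1) k (k + 1)).Exact :=
      ((A.exactAt_iff' (k - 1) k (k + 1) (by simp) (by simp)).1 (hA k))
    rw [ShortComplex.moduleCat_exact_iff] at hex
    obtain ⟨y, hy⟩ := hex x hx
    have hy' : A.d (k - 1) k y = x := hy
    have hcomm := f.comm (k - 1) k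
    have hz : f.f (k - 1) = 0 := (hT (k - 1) (by omega)).eq_of_tgt _ _
    calc f.f k x = (A.d (k - 1) k ≫ f.f k) y := by rw [← hy']; rfl
    _ = (f.f (k - 1) ≫ T.d (k - 1) k) y := by rw [← hcomm]
    _ = 0 := by rw [hz, Limits.zero_comp]; rfl
  set dk : A.X k →ₗ[R] A.X (k + 1) := (A.d k (k + 1) : A.X k ⟶ A.X (k + 1)).hom with hdk
  have hle : LinearMap.ker dk ≤ LinearMap.ker (f.f k : A.X k ⟶ T.X k).hom := by
    intro x hx
    exact hker x hx
  let ψ : (A.X k ⧸ LinearMap.ker dk) →ₗ[R] T.X k :=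
    Submodule.liftQ _ (f.f k : A.X k ⟶ T.X k).hom hle
  let φ : ModuleCat.of R (LinearMap.range dk) ⟶ T.X k :=
    ModuleCat.ofHom (ψ ∘ₗ (LinearMap.quotKerEquivRange dk).symm.toLinearMap)
  let ι : ModuleCat.of R (LinearMap.range dk) ⟶ A.X (k + 1) := ModuleCat.ofHom (LinearMap.range dk).subtype
  have hmono : Mono ι := by
    rw [ModuleCat.mono_iff_injective]
    exact Subtype.coe_injective
  let u : A.X (k + 1) ⟶ T.X k := @Injective.factorThru _ _ _ _ _ hI φ ι hmono
  have hu : ∀ x : A.X k, u (A.d k (k + 1) x) = f.f k x := by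
    intro x
    have h1 : A.d k (k + 1) x = ι ⟨dk x, LinearMap.mem_range_self dk x⟩ := rfl
    rw [h1]
    have h2 : (ι ≫ u) = φ := @Injective.comp_factorThru _ _ _ _ _ hI φ ι hmono
    have h3 : u (ι ⟨dk x, LinearMap.mem_range_self dk x⟩)
        = φ ⟨dk x, LinearMap.mem_range_self dk x⟩ := by
      rw [← h2]; rfl
    rw [h3]
    show ψ ((LinearMap.quotKerEquivRange dk).symm ⟨dk x, _⟩) = f.f k x
    have h4 : (LinearMap.quotKerEquivRange dk).symm ⟨dk x, LinearMap.mem_range_self dk x⟩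
        = Submodule.Quotient.mk x := by
      rw [LinearEquiv.symm_apply_eq]
      exact Subtype.ext (LinearMap.quotKerEquivRange_apply_mk dk x).symm
    rw [h4]
    rfl
  refine
    { hom := fun i j =>
        if h : i = k + 1 ∧ j = k then
          eqToHom (congrArg A.X h.1) ≫ u ≫ eqToHom (congrArg T.X h.2.symm)
        else 0
      zero := ?_
      comm := ?_ }
  · intro i j hij
    rw [dif_neg]
    rintro ⟨rfl, rfl⟩
    exact hij (by simp)
  · intro i
    by_cases hik : i = k
    · subst hik
      rw [dNext_eq _ (show (ComplexShape.up ℤ).Rel i (i + 1) by simp),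
        prevD_eq _ (show (ComplexShape.up ℤ).Rel (i - 1) i by simp)]
      rw [dif_pos ⟨rfl, rfl⟩, dif_neg (by omega)]
      ext x
      simpa using (hu x).symm
    · have hz : f.f i = 0 := (hT i hik).eq_of_tgt _ _
      by_cases hik1 : i = k + 1
      · subst hik1
        rw [dNext_eq _ (show (ComplexShape.up ℤ).Rel (k + 1) (k + 1 + 1) by simp),
          prevD_eq _ (show (ComplexShape.up ℤ).Rel k (k + 1) by simp)]
        rw [dif_neg (by omega), dif_pos ⟨rfl, rfl⟩]
        have hTd : T.d k (k + 1) = 0 := (hT (k + 1) (by omega)).eq_of_tgt _ _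
        rw [hz]
        simp [hTd]
      · rw [dNext_eq _ (show (ComplexShape.up ℤ).Rel i (i + 1) by simp),
          prevD_eq _ (show (ComplexShape.up ℤ).Rel (i - 1) i by simp)]
        rw [dif_neg (by omega), dif_neg (by omega), hz]
        simp


end NullHomotopy

section Localization

variable {C : Type u} [Category.{v} C] [Abelian C]

local notation "K" => HomotopyCategory C (ComplexShape.up ℤ)
local notation "Wq" => HomotopyCategory.quasiIso C (ComplexShape.up ℤ)

lemma hasLeftCalc : (HomotopyCategory.quasiIso C (ComplexShape.up ℤ)).HasLeftCalculusOfFractions := by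
  rw [HomotopyCategory.quasiIso_eq_subcategoryAcyclic_W]
  infer_instance

/-- If all maps from acyclic objects to `Y` vanish, then any quasi-isomorphism out of `Y`
admits a retraction. -/
lemma retraction_of_quasiIso (Y : K)
    (hY : ∀ (A : K), (HomotopyCategory.subcategoryAcyclic C) A → ∀ f : A ⟶ Y, f = 0)
    {Z : K} (s : Y ⟶ Z) (hs : (HomotopyCategory.quasiIso C (ComplexShape.up ℤ)) s) :
    ∃ r : Z ⟶ Y, s ≫ r = 𝟙 Y := by
  rw [HomotopyCategory.quasiIso_eq_subcategoryAcyclic_W,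
    ObjectProperty.trW_iff'] at hs
  obtain ⟨A, a, b, hT, hA⟩ := hs
  obtain ⟨r, hr⟩ := Pretriangulated.Triangle.yoneda_exact₂ _ hT (𝟙 Y)
    (by exact (Category.comp_id a).trans (hY A hA a))
  exact ⟨r, hr.symm⟩

variable [HasDerivedCategory.{w'} C]

lemma qh_map_bijective (Y : K)
    (hY : ∀ (A : K), (HomotopyCategory.subcategoryAcyclic C) A → ∀ f : A ⟶ Y, f = 0)
    (X : K) : Function.Bijective (fun f : X ⟶ Y => DerivedCategory.Qh.map f) := by
  have := hasLeftCalc (C := C)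
  constructor
  · intro f₁ f₂ h
    rw [MorphismProperty.map_eq_iff_postcomp DerivedCategory.Qh
      (HomotopyCategory.quasiIso C (ComplexShape.up ℤ))] at h
    obtain ⟨Z, s, hs, hfs⟩ := h
    obtain ⟨r, hr⟩ := retraction_of_quasiIso Y hY s hs
    calc f₁ = f₁ ≫ s ≫ r := by rw [hr, Category.comp_id]
    _ = f₂ ≫ s ≫ r := by rw [← Category.assoc, hfs, Category.assoc]
    _ = f₂ := by rw [hr, Category.comp_id]
  · intro g
    obtain ⟨φ, hφ⟩ := Localization.exists_leftFraction DerivedCategory.Qh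
      (HomotopyCategory.quasiIso C (ComplexShape.up ℤ)) g
    obtain ⟨r, hr⟩ := retraction_of_quasiIso Y hY φ.s φ.hs
    refine ⟨φ.f ≫ r, ?_⟩
    have hiso : IsIso (DerivedCategory.Qh.map φ.s) :=
      Localization.inverts DerivedCategory.Qh
        (HomotopyCategory.quasiIso C (ComplexShape.up ℤ)) φ.s φ.hs
    have hinv : DerivedCategory.Qh.map r = inv (DerivedCategory.Qh.map φ.s) := by
      apply IsIso.eq_inv_of_hom_inv_id
      rw [← DerivedCategory.Qh.map_comp, hr, DerivedCategory.Qh.map_id]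
    have hmap : φ.map DerivedCategory.Qh (Localization.inverts DerivedCategory.Qh
        (HomotopyCategory.quasiIso C (ComplexShape.up ℤ))) =
        DerivedCategory.Qh.map φ.f ≫ inv (DerivedCategory.Qh.map φ.s) := by
      simp [MorphismProperty.LeftFraction.map]
    show DerivedCategory.Qh.map (φ.f ≫ r) = g
    rw [hφ, hmap, DerivedCategory.Qh.map_comp, hinv]


section ModCat

variable {R : Type u} [Ring R]

/-- maps from acyclics into complexes concentrated in one injective degree vanish -/
lemma hom_from_acyclic_eq_zero (T : CochainComplex (ModuleCat.{u} R) ℤ) (k : ℤ)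
    (hT : ∀ j, j ≠ k → IsZero (T.X j)) (hI : Injective (T.X k))
    (A : HomotopyCategory (ModuleCat.{u} R) (ComplexShape.up ℤ))
    (hA : (HomotopyCategory.subcategoryAcyclic (ModuleCat.{u} R)) A)
    (f : A ⟶ (HomotopyCategory.quotient _ _).obj T) : f = 0 := by
  obtain ⟨f', rfl⟩ := (HomotopyCategory.quotient (ModuleCat.{u} R)
    (ComplexShape.up ℤ)).map_surjective f
  have hAc : ∀ n, A.as.ExactAt n :=
    (HomotopyCategory.quotient_obj_mem_subcategoryAcyclic_iff_exactAt A.as).1 hA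
  have h := HomotopyCategory.eq_of_homotopy _ _ (nullHomotopyOfAcyclic A.as T k hAc hT hI f')
  rw [h]
  exact (HomotopyCategory.quotient _ _).map_zero _ _


section Shifted
variable [HasDerivedCategory.{w'} (ModuleCat.{u} R)]

/-- Hom into shifted injective single: subsingleton for positive shift. -/
lemma homD_single_shift_subsingleton (X I : ModuleCat.{u} R) (hI : Injective I)
    (n : ℤ) (hn : 0 < n) :
    Subsingleton ((DerivedCategory.singleFunctor (ModuleCat.{u} R) 0).obj X ⟶
      ((DerivedCategory.singleFunctor (ModuleCat.{u} R) 0).obj I)⟦n⟧) := by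
  set Xc := (CochainComplex.singleFunctor (ModuleCat.{u} R) 0).obj X with hXc
  set Ic := (CochainComplex.singleFunctor (ModuleCat.{u} R) 0).obj I with hIc
  set Q' := HomotopyCategory.quotient (ModuleCat.{u} R) (ComplexShape.up ℤ) with hQ'
  -- isZero facts about `Ic⟦n⟧`
  have hzero : ∀ j : ℤ, j ≠ -n → IsZero ((Ic⟦n⟧).X j) := by
    intro j hj
    refine IsZero.of_iso ?_ (eqToIso (CochainComplex.shiftFunctor_obj_X' Ic n j))
    exact HomologicalComplex.isZero_single_obj_X _ 0 I (j + n) (by omega)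
  have hinj : Injective ((Ic⟦n⟧).X (-n)) := by
    have h0 : Injective (Ic.X 0) :=
      Injective.of_iso (HomologicalComplex.singleObjXSelf (ComplexShape.up ℤ) 0 I).symm hI
    have he : Ic.X 0 = (Ic⟦n⟧).X (-n) := by
      rw [CochainComplex.shiftFunctor_obj_X' Ic n (-n)]
      congr 1
      omega
    exact Injective.of_iso (eqToIso he) h0
  -- all chain maps `Xc ⟶ Ic⟦n⟧` agree
  have hcc : ∀ f g : Xc ⟶ Ic⟦n⟧, f = g := by
    intro f g
    apply HomologicalComplex.hom_ext
    intro i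
    by_cases hi : i = 0
    · subst hi
      exact (hzero 0 (by omega)).eq_of_tgt _ _
    · exact (HomologicalComplex.isZero_single_obj_X _ 0 X i hi).eq_of_src _ _
  -- homotopy category level
  have hK : ∀ f g : Q'.obj Xc ⟶ Q'.obj (Ic⟦n⟧), f = g := by
    intro f g
    obtain ⟨f', rfl⟩ := Q'.map_surjective f
    obtain ⟨g', rfl⟩ := Q'.map_surjective g
    rw [hcc f' g']
  -- derived category level
  have hbij := qh_map_bijective (Q'.obj (Ic⟦n⟧))
    (hom_from_acyclic_eq_zero (Ic⟦n⟧) (-n) hzero hinj) (Q'.obj Xc)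
  have hD : ∀ f g : Qh.obj (Q'.obj Xc) ⟶ Qh.obj (Q'.obj (Ic⟦n⟧)), f = g := by
    intro f g
    obtain ⟨f', rfl⟩ := hbij.2 f
    obtain ⟨g', rfl⟩ := hbij.2 g
    rw [hK f' g']
  -- transfer along the shift-commutation isomorphism
  have ε : Qh.obj (Q'.obj (Ic⟦n⟧)) ≅
      ((DerivedCategory.singleFunctor (ModuleCat.{u} R) 0).obj I)⟦n⟧ :=
    Qh.mapIso ((Q'.commShiftIso n).app Ic) ≪≫ (Qh.commShiftIso n).app (Q'.obj Ic)
  refine ⟨fun f g => ?_⟩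
  have := hD (f ≫ ε.inv) (g ≫ ε.inv)
  calc f = (f ≫ ε.inv) ≫ ε.hom := by simp
  _ = (g ≫ ε.inv) ≫ ε.hom := congrArg (· ≫ ε.hom) this
  _ = g := by simp

/-- the single functor to the derived category is bijective on homs into injectives -/
lemma singleFunctor_map_bijective (X I : ModuleCat.{u} R) (hI : Injective I) :
    Function.Bijective (fun f : X ⟶ I =>
      (DerivedCategory.singleFunctor (ModuleCat.{u} R) 0).map f) := by
  set Q' := HomotopyCategory.quotient (ModuleCat.{u} R) (ComplexShape.up ℤ) with hQ'
  have hzero : ∀ j : ℤ, j ≠ 0 →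
      IsZero (((CochainComplex.singleFunctor (ModuleCat.{u} R) 0).obj I).X j) := fun j hj =>
    HomologicalComplex.isZero_single_obj_X _ 0 I j hj
  have hinj : Injective (((CochainComplex.singleFunctor (ModuleCat.{u} R) 0).obj I).X 0) :=
    Injective.of_iso (HomologicalComplex.singleObjXSelf (ComplexShape.up ℤ) 0 I).symm hI
  -- bijectivity of single at complex level
  have b1 : Function.Bijective (fun f : X ⟶ I =>
      (HomologicalComplex.single (ModuleCat.{u} R) (ComplexShape.up ℤ) 0).map f) := by
    constructor
    · intro f g h
      have h0 := congrArg (fun φ => HomologicalComplex.Hom.f φ 0) h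
      simp only [HomologicalComplex.single_map_f_self] at h0
      have := congrArg (fun φ => (HomologicalComplex.singleObjXSelf
        (ComplexShape.up ℤ) 0 X).inv ≫ φ ≫ (HomologicalComplex.singleObjXSelf
        (ComplexShape.up ℤ) 0 I).hom) h0
      simpa using this
    · intro h
      refine ⟨(HomologicalComplex.singleObjXSelf (ComplexShape.up ℤ) 0 X).inv ≫ h.f 0 ≫
        (HomologicalComplex.singleObjXSelf (ComplexShape.up ℤ) 0 I).hom, ?_⟩
      apply HomologicalComplex.hom_ext
      intro i
      by_cases hi : i = 0
      · subst hi
        simp [HomologicalComplex.single_map_f_self]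
      · exact (HomologicalComplex.isZero_single_obj_X _ 0 X i hi).eq_of_src _ _
  -- bijectivity of quotient on singles
  have b2 : Function.Bijective (fun f : (CochainComplex.singleFunctor (ModuleCat.{u} R) 0).obj X ⟶
      (CochainComplex.singleFunctor (ModuleCat.{u} R) 0).obj I => Q'.map f) := by
    constructor
    · intro f g h
      have hom := HomotopyCategory.homotopyOfEq _ _ h
      apply HomologicalComplex.hom_ext
      intro i
      by_cases hi : i = 0
      · subst hi
        have := hom.comm 0
        rw [dNext_eq hom.hom (show (ComplexShape.up ℤ).Rel 0 1 by simp),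
          prevD_eq hom.hom (show (ComplexShape.up ℤ).Rel (-1) 0 by simp)] at this
        have hd1 : ((CochainComplex.singleFunctor (ModuleCat.{u} R) 0).obj X).d 0 1 = 0 :=
          HomologicalComplex.single_obj_d _ 0 X 0 1
        have hd2 : ((CochainComplex.singleFunctor (ModuleCat.{u} R) 0).obj I).d (-1) 0 = 0 :=
          HomologicalComplex.single_obj_d _ 0 I (-1) 0
        simpa [hd1, hd2] using this
      · exact (HomologicalComplex.isZero_single_obj_X _ 0 X i hi).eq_of_src _ _
    · exact Q'.map_surjective
  have b3 := qh_map_bijective (Q'.obj ((CochainComplex.singleFunctor (ModuleCat.{u} R) 0).obj I))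
    (hom_from_acyclic_eq_zero _ 0 hzero hinj)
    (Q'.obj ((CochainComplex.singleFunctor (ModuleCat.{u} R) 0).obj X))
  exact b3.comp (b2.comp b1)

end Shifted

variable [HasExt.{w} (ModuleCat.{u} R)]


lemma ext_subsingleton_of_injective (X I : ModuleCat.{u} R) (hI : Injective I)
    (n : ℕ) (hn : 1 ≤ n) : Subsingleton (Abelian.Ext X I n) := by
  letI := HasDerivedCategory.standard (ModuleCat.{u} R)
  have h := homD_single_shift_subsingleton X I hI (n : ℤ) (by exact_mod_cast hn)
  have h' : Subsingleton (ShiftedHom ((singleFunctor (ModuleCat.{u} R) 0).obj X)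
      ((singleFunctor (ModuleCat.{u} R) 0).obj I) (n : ℤ)) := h
  exact Equiv.subsingleton (Abelian.Ext.homEquiv)

lemma ext_mk₀_bijective (X I : ModuleCat.{u} R) (hI : Injective I) :
    Function.Bijective (fun f : X ⟶ I => Abelian.Ext.mk₀ f) := by
  letI := HasDerivedCategory.standard (ModuleCat.{u} R)
  have b := singleFunctor_map_bijective X I hI
  have bp : Function.Bijective (fun g : (DerivedCategory.singleFunctor (ModuleCat.{u} R) 0).obj X ⟶
      (DerivedCategory.singleFunctor (ModuleCat.{u} R) 0).obj I =>
        ShiftedHom.mk₀ ((0 : ℕ) : ℤ) (by simp) g) := by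
    constructor
    · intro f g h
      dsimp [ShiftedHom.mk₀] at h
      exact (cancel_mono _).1 h
    · intro g'
      refine ⟨g' ≫ (shiftFunctorZero' (DerivedCategory (ModuleCat.{u} R)) ((0:ℕ):ℤ)
        (by simp)).hom.app _, ?_⟩
      dsimp [ShiftedHom.mk₀]
      simp
  have heq : (fun f : X ⟶ I => Abelian.Ext.mk₀ f) =
      (Abelian.Ext.homEquiv.symm) ∘ ((fun g => ShiftedHom.mk₀ ((0 : ℕ) : ℤ) (by simp) g) ∘
        (fun f => (DerivedCategory.singleFunctor (ModuleCat.{u} R) 0).map f)) := by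
    funext f
    apply Abelian.Ext.homEquiv.injective
    rw [Function.comp_apply, Equiv.apply_symm_apply]
    exact Abelian.Ext.mk₀_hom f
  rw [heq]
  exact (Equiv.bijective _).comp (bp.comp b)


open Abelian

lemma ext_comp_inv_hom {X Y Y' : ModuleCat.{u} R} (e : Y ≅ Y') {n : ℕ}
    (α : Abelian.Ext X Y' n) :
    (α.comp (Ext.mk₀ e.inv) (add_zero n)).comp (Ext.mk₀ e.hom) (add_zero n) = α := by
  rw [Ext.comp_assoc_of_third_deg_zero, Ext.mk₀_comp_mk₀, e.inv_hom_id, Ext.comp_mk₀_id]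

lemma ext_subsingleton_congr {X Y Y' : ModuleCat.{u} R} (e : Y ≅ Y') {n : ℕ}
    (h : Subsingleton (Abelian.Ext X Y n)) : Subsingleton (Abelian.Ext X Y' n) := by
  refine ⟨fun a b => ?_⟩
  rw [← ext_comp_inv_hom e a, ← ext_comp_inv_hom e b,
    Subsingleton.elim (h := h) (a.comp (Ext.mk₀ e.inv) (add_zero n))
      (b.comp (Ext.mk₀ e.inv) (add_zero n))]

lemma injective_of_retract {X Y : ModuleCat.{u} R} (i : X ⟶ Y) (r : Y ⟶ X)
    (h : i ≫ r = 𝟙 X) (hY : Injective Y) : Injective X := by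
  refine ⟨fun {A B} g f hm => ?_⟩
  obtain ⟨h', hh⟩ := hY.factors (g ≫ i) f
  exact ⟨h' ≫ r, by rw [← Category.assoc, hh, Category.assoc, h, Category.comp_id]⟩

lemma injective_X₁_of_shortExact (S : ShortComplex (ModuleCat.{u} R)) (hS : S.ShortExact)
    (h2 : Injective S.X₂) (h3 : Injective S.X₃)
    (hext : Subsingleton (Abelian.Ext S.X₃ S.X₁ 1)) : Injective S.X₁ := by
  have hcls : hS.extClass = 0 := Subsingleton.elim _ _
  obtain ⟨x₂, hx₂⟩ := Ext.covariant_sequence_exact₃ S.X₃ hS (Ext.mk₀ (𝟙 S.X₃)) (zero_add 1)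
    (by rw [Ext.mk₀_id_comp, hcls])
  obtain ⟨s, rfl⟩ := (ext_mk₀_bijective S.X₃ S.X₂ h2).2 x₂
  rw [Ext.mk₀_comp_mk₀] at hx₂
  have hsg : s ≫ S.g = 𝟙 S.X₃ := (ext_mk₀_bijective S.X₃ S.X₃ h3).1 hx₂
  have hsplit := ShortComplex.Splitting.ofExactOfSection S hS.exact s hsg hS.mono_f
  exact injective_of_retract S.f hsplit.r hsplit.f_r h2


/-- Any injective module is Gorenstein injective. -/
lemma gorensteinInjective_of_injective (N : ModuleCat.{u} R) (hN : Injective N) :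
    GorensteinInjective N := by
  constructor
  · intro I _ n hn
    exact ext_subsingleton_of_injective I N hN n hn
  · refine ⟨fun _ => N, fun n => if n % 2 = 0 then 0 else 𝟙 N, 𝟙 N,
      fun _ => hN, inferInstance, ?_, ?_, ?_⟩
    · refine ⟨by simp, ?_⟩
      rw [ShortComplex.exact_iff_mono _ (by simp)]
      infer_instance
    · intro n
      by_cases hn : n % 2 = 0
      · have hn1 : ¬ ((n + 1) % 2 = 0) := by omega
        refine ⟨by simp [hn, hn1], ?_⟩
        rw [ShortComplex.exact_iff_epi _ (by simp [hn])]
        show Epi (if (n + 1) % 2 = 0 then (0 : N ⟶ N) else 𝟙 N)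
        rw [if_neg hn1]
        infer_instance
      · have hn1 : (n + 1) % 2 = 0 := by omega
        refine ⟨by simp [hn, hn1], ?_⟩
        rw [ShortComplex.exact_iff_mono _ (by simp [hn1])]
        show Mono (if n % 2 = 0 then (0 : N ⟶ N) else 𝟙 N)
        rw [if_neg hn]
        infer_instance
    · intro E _
      refine ⟨fun g => ⟨g, by simp⟩, fun g hg => ⟨0, by simpa using hg.symm⟩, fun n g hg => ?_⟩
      by_cases hn : n % 2 = 0
      · have hn1 : ¬ ((n + 1) % 2 = 0) := by omega
        exact ⟨g, by simp [hn1]⟩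
      · have hg0 : g = 0 := by simpa [hn] using hg
        have hn1 : (n + 1) % 2 = 0 := by omega
        exact ⟨0, by simp [hn1, hg0]⟩

lemma idLE_GI_of_idLE_inj (k : ℕ) (M : ModuleCat.{u} R)
    (h : idLE (fun I => Injective I) k M) :
    idLE (GorensteinInjective (C := ModuleCat.{u} R)) k M := by
  induction k generalizing M with
  | zero => exact gorensteinInjective_of_injective M h
  | succ k ih =>
    obtain ⟨S, hS, hiso, h2, h3⟩ := h
    exact ⟨S, hS, hiso, gorensteinInjective_of_injective _ h2, ih _ h3⟩

/-- Lemma A : vanishing of Ext above a Gorenstein injective bound. -/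
lemma ext_subsingleton_of_idLE_GI (k : ℕ) (N : ModuleCat.{u} R)
    (h : idLE (GorensteinInjective (C := ModuleCat.{u} R)) k N)
    (J : ModuleCat.{u} R) (hJ : Injective J) (m : ℕ) (hm : k + 1 ≤ m) :
    Subsingleton (Abelian.Ext J N m) := by
  induction k generalizing N m with
  | zero => exact h.1 J hJ m hm
  | succ k ih =>
    obtain ⟨S, hS, ⟨e⟩, h2, h3⟩ := h
    refine ext_subsingleton_congr e ?_
    obtain ⟨m, rfl⟩ : ∃ m', m = m' + 1 := ⟨m - 1, by omega⟩
    refine ⟨fun a b => ?_⟩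
    have key : ∀ x : Abelian.Ext J S.X₁ (m + 1), x = 0 := by
      intro x
      have hx : x.comp (Ext.mk₀ S.f) (add_zero _) = 0 :=
        Subsingleton.elim (h := h2.1 J hJ (m + 1) (by omega)) _ _
      obtain ⟨x₃, hx₃⟩ := Ext.covariant_sequence_exact₁ J hS x hx rfl
      have : x₃ = 0 := Subsingleton.elim (h := ih _ h3 _ (by omega)) _ _
      rw [← hx₃, this, Ext.zero_comp]
    rw [key a, key b]

/-- Lemma B : dropping the injective dimension bound by one. -/
lemma idLE_inj_pred (e : ℕ) (M : ModuleCat.{u} R)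
    (h : idLE (fun I => Injective I) (e + 1) M)
    (hext : ∀ J : ModuleCat.{u} R, Injective J → Subsingleton (Abelian.Ext J M (e + 1))) :
    idLE (fun I => Injective I) e M := by
  induction e generalizing M with
  | zero =>
    obtain ⟨S, hS, ⟨eiso⟩, h2, h3⟩ := h
    have h3' : Injective S.X₃ := h3
    have hsub : Subsingleton (Abelian.Ext S.X₃ S.X₁ 1) :=
      ext_subsingleton_congr eiso.symm (hext S.X₃ h3')
    have : Injective S.X₁ := injective_X₁_of_shortExact S hS h2 h3' hsub
    exact Injective.of_iso eiso this
  | succ e ih =>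
    obtain ⟨S, hS, ⟨eiso⟩, h2, h3⟩ := h
    have hext3 : ∀ J : ModuleCat.{u} R, Injective J →
        Subsingleton (Abelian.Ext J S.X₃ (e + 1)) := by
      intro J hJ
      refine ⟨fun a b => ?_⟩
      have key : ∀ x : Abelian.Ext J S.X₃ (e + 1), x = 0 := by
        intro x
        have hsub1 : Subsingleton (Abelian.Ext J S.X₁ (e + 1 + 1)) :=
          ext_subsingleton_congr eiso.symm (hext J hJ)
        have hx : x.comp hS.extClass rfl = 0 := Subsingleton.elim (h := hsub1) _ _
        obtain ⟨x₂, hx₂⟩ := Ext.covariant_sequence_exact₃ J hS x rfl hx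
        have : x₂ = 0 :=
          Subsingleton.elim (h := ext_subsingleton_of_injective J S.X₂ h2 (e + 1) (by omega)) _ _
        rw [← hx₂, this, Ext.zero_comp]
      rw [key a, key b]
    exact ⟨S, hS, ⟨eiso⟩, h2, ih _ h3 hext3⟩


end ModCat
end Localization
end GIaux

open RelHomDim in
/-- For any left `R`-module `M` with finite injective dimension, the Gorenstein
injective dimension of `M` equals its injective dimension. -/
theorem gorensteinInjectiveDim_eq_injectiveDim {R : Type u} [Ring R]
    [HasExt.{w} (ModuleCat.{u} R)]
    (M : ModuleCat.{u} R) (hM : idim (fun I => Injective I) M ≠ ⊤) :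
    idim (GorensteinInjective (C := ModuleCat.{u} R)) M
      = idim (fun I => Injective I) M := by
  classical
  have hne : ∃ k : ℕ, idLE (fun I : ModuleCat.{u} R => Injective I) k M := by
    by_contra hc
    push_neg at hc
    apply hM
    have hempty : {n : ℕ∞ | ∃ k : ℕ, n = (k : ℕ∞) ∧
        idLE (fun I : ModuleCat.{u} R => Injective I) k M} = ∅ := by
      ext n
      simp only [Set.mem_setOf_eq, Set.mem_empty_iff_false, iff_false]
      rintro ⟨k, -, hk⟩
      exact hc k hk
    show sInf _ = ⊤
    rw [hempty, sInf_empty]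
  let d := Nat.find hne
  have hd : idLE (fun I : ModuleCat.{u} R => Injective I) d M := Nat.find_spec hne
  have hmin : ∀ k, idLE (fun I : ModuleCat.{u} R => Injective I) k M → d ≤ k :=
    fun k hk => Nat.find_min' hne hk
  have h1 : idim (fun I : ModuleCat.{u} R => Injective I) M = (d : ℕ∞) := by
    refine le_antisymm (sInf_le ⟨d, rfl, hd⟩) (le_sInf ?_)
    rintro n ⟨k, rfl, hk⟩
    exact_mod_cast hmin k hk
  have hGIle : ∀ k, idLE (GorensteinInjective (C := ModuleCat.{u} R)) k M → d ≤ k := by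
    intro k hk
    by_contra hlt
    push_neg at hlt
    have hA := GIaux.ext_subsingleton_of_idLE_GI k M hk
    obtain ⟨e, he⟩ : ∃ e, d = e + 1 := ⟨d - 1, by omega⟩
    have hd' : idLE (fun I : ModuleCat.{u} R => Injective I) (e + 1) M := he ▸ hd
    have hdrop := GIaux.idLE_inj_pred e M hd' (fun J hJ => hA J hJ (e + 1) (by omega))
    have := hmin e hdrop
    omega
  have h2 : idim (GorensteinInjective (C := ModuleCat.{u} R)) M = (d : ℕ∞) := by
    refine le_antisymm (sInf_le ⟨d, rfl, GIaux.idLE_GI_of_idLE_inj d M hd⟩) (le_sInf ?_)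
    rintro n ⟨k, rfl, hk⟩
    exact_mod_cast hGIle k hk
  rw [h1, h2]
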